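/- The pair û₀(t,x) = x/(t−1), û₁(t,x) = C₁/(2t−2) satisfies the stochastic Galerkin system for Burgers' equation with K = 1: ∂_t û₀ + ∂_x ((û₀² + û₁²)/2) = 0 and ∂_t û₁ + ∂_x (û₀ û₁) = 0, for all x ∈ ℝ and t < 1, where C₁ is any real constant. -/

import Mathlib

theorem deriv_const_div_affine (a b c t : ℝ) (h : b * t - c ≠ 0) :
    deriv (fun s : ℝ => a / (b * s - c)) t = -(a * b) / (b * t - c) ^ 2 := by
  have hderiv : HasDerivAt (fun s : ℝ => a / (b * s - c)) (-(a * b) / (b * t - c) ^ 2) t :=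
    ((hasDerivAt_const t a).div (((hasDerivAt_id' t).const_mul b).sub_const c) h).congr_deriv
      (by ring)
  exact hderiv.deriv

theorem deriv_half_sq_div_add_const (a b x : ℝ) :
    deriv (fun y : ℝ => ((y / a) ^ 2 + b) / 2) x = x / a ^ 2 := by
  have hderiv : HasDerivAt (fun y : ℝ => ((y / a) ^ 2 + b) / 2) (x / a ^ 2) x :=
    ((((hasDerivAt_id' x).div_const a).pow 2).add_const b).div_const 2 |>.congr_deriv
      (by push_cast; ring)
  exact hderiv.deriv

theorem deriv_div_const_mul_const (a b x : ℝ) :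
    deriv (fun y : ℝ => y / a * b) x = b / a := by
  simp only [deriv_mul_const_field', deriv_div_const, deriv_id'']
  ring

/-- The pair `û₀(t,x) = x/(t−1)`, `û₁(t,x) = C₁/(2t−2)` is an exact solution of
the `K = 1` stochastic Galerkin system for Burgers' equation:
`∂_t û₀ + ∂_x((û₀² + û₁²)/2) = 0` and `∂_t û₁ + ∂_x(û₀ û₁) = 0` for `t < 1`. -/
theorem burgers_sg_exact_solution (C₁ : ℝ) (t x : ℝ) (ht : t < 1) :
    (deriv (fun s : ℝ => x / (s - 1)) t +
        deriv (fun y : ℝ =>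
          ((y / (t - 1)) ^ 2 + (C₁ / (2 * t - 2)) ^ 2) / 2) x = 0) ∧
      (deriv (fun s : ℝ => C₁ / (2 * s - 2)) t +
        deriv (fun y : ℝ => (y / (t - 1)) * (C₁ / (2 * t - 2))) x = 0) := by
  have ht₁ : t - 1 ≠ 0 := sub_ne_zero.mpr ht.ne
  have ht₂ : 2 * t - 2 ≠ 0 := by
    rw [show 2 * t - 2 = 2 * (t - 1) by ring]
    exact mul_ne_zero two_ne_zero ht₁
  have hû₀ : deriv (fun s : ℝ => x / (s - 1)) t = -x / (t - 1) ^ 2 := by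
    simpa using deriv_const_div_affine x 1 1 t (by simpa using ht₁)
  rw [hû₀, deriv_const_div_affine C₁ 2 2 t ht₂, deriv_half_sq_div_add_const,
    deriv_div_const_mul_const]
  constructor <;> field_simp <;> ring
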